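/- Let S be a nonabelian simple subnormal subgroup of a finite group G and suppose a subgroup U of S satisfies: for every automorphism φ of S induced by conjugation by an element of N_G(S), the image φ(U) is S-conjugate to U. Let g₁,…,gₙ be a right transversal of N_G(S) in G, A = ⟨S^G⟩, and V = ⟨U^{g₁},…,U^{gₙ}⟩. Then V^G = V^A, i.e., the G-conjugacy class of V equals its A-conjugacy class. -/

import Mathlib

def conjSub {G : Type*} [Group G] (g : G) (H : Subgroup G) : Subgroup G :=
  H.map (MulAut.conj g).toMonoidHom

def IsSubnormalIn {G : Type*} [Group G] (H : Subgroup G) : Prop :=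
  ∃ n : ℕ, ∃ c : Fin (n + 1) → Subgroup G, c 0 = H ∧ c (Fin.last n) = ⊤ ∧
    ∀ i : Fin n, c i.castSucc ≤ c i.succ ∧ ((c i.castSucc).subgroupOf (c i.succ)).Normal

/-!
Right multiplication by `x ∈ G` permutes the cosets `N_G(S) gᵢ`: `gᵢ x = nᵢ g_{σ i}` with
`nᵢ ∈ N_G(S)`. The hypothesis on `U` trades `nᵢ` for some `sᵢ ∈ S`, so
`(U^{gᵢ})^x = (U^{g_{σ i}})^{t_{σ i}}` with `tⱼ = gⱼ⁻¹ s_{σ⁻¹ j} gⱼ ∈ S^{gⱼ}`. The conjugates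
`S^{gⱼ}` are pairwise distinct nonabelian simple subnormal subgroups, hence commute elementwise;
so `a = ∏ tⱼ` lies in `⟨S^G⟩` and acts on each `U^{gⱼ} ≤ S^{gⱼ}` as `tⱼ` does, giving `V^x = V^a`.
-/

open Subgroup Group

theorem Group.isPerfect_of_isSimpleGroup (G : Type*) [Group G] [IsSimpleGroup G]
    (h : ¬ IsMulCommutative G) : IsPerfect G := by
  rw [isPerfect_def]
  refine (commutator_normal ⊤ ⊤).eq_bot_or_eq_top.resolve_left fun hbot => h ?_
  exact (commutator_eq_bot_iff G).mp hbot

section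

variable {G : Type*} [Group G]

theorem mem_conjSub {g x : G} {H : Subgroup G} : x ∈ conjSub g H ↔ g⁻¹ * x * g ∈ H := by
  rw [conjSub, mem_map_equiv, MulAut.conj_symm_apply]

theorem conjSub_mul (a b : G) (H : Subgroup G) :
    conjSub (a * b) H = conjSub a (conjSub b H) := by
  simp only [conjSub, map_mul, map_map]
  rfl

theorem conjSub_eq_self_iff {g : G} {H : Subgroup G} :
    conjSub g H = H ↔ g ∈ normalizer (H : Set G) :=
  mem_normalizer_iff_map_conj_eq.symm

theorem conjSub_mul_of_mem_centralizer {c t : G} {H : Subgroup G}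
    (hc : c ∈ centralizer (H : Set G)) : conjSub (t * c) H = conjSub t H := by
  rw [conjSub_mul, conjSub_eq_self_iff.mpr (centralizer_le_normalizer _ hc)]

theorem conjSub_one (H : Subgroup G) : conjSub 1 H = H :=
  conjSub_eq_self_iff.mpr (one_mem _)

theorem conjSub_mono {g : G} {H K : Subgroup G} (h : H ≤ K) : conjSub g H ≤ conjSub g K :=
  map_mono h

theorem conjSub_iSup {ι : Sort*} (g : G) (H : ι → Subgroup G) :
    conjSub g (⨆ i, H i) = ⨆ i, conjSub g (H i) :=
  map_iSup _ _

theorem conjSub_le_normalClosure (g : G) (H : Subgroup G) :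
    conjSub g H ≤ normalClosure (H : Set G) := fun y hy => by
  simpa [mul_assoc] using
    normalClosure_normal.conj_mem _ (subset_normalClosure (mem_conjSub.mp hy)) g

theorem Subgroup.IsSubnormal.conjSub {H : Subgroup G} (hH : H.IsSubnormal) (g : G) :
    (conjSub g H).IsSubnormal :=
  hH.map (MulAut.conj g).surjective

instance (g : G) (H : Subgroup G) [IsSimpleGroup H] : IsSimpleGroup (conjSub g H) :=
  ((MulAut.conj g).subgroupMap H).symm.isSimpleGroup

instance (g : G) (H : Subgroup G) [IsPerfect H] : IsPerfect (conjSub g H) :=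
  IsPerfect.map _

theorem IsSubnormalIn.isSubnormal {H : Subgroup G} (hH : IsSubnormalIn H) : H.IsSubnormal := by
  obtain ⟨n, c, rfl, hlast, hstep⟩ := hH
  suffices ∀ i, (c i).IsSubnormal from this 0
  intro i
  induction i using Fin.reverseInduction with
  | last => exact hlast ▸ IsSubnormal.top
  | cast i ih => exact IsSubnormal.step _ _ (hstep i).1 ih (hstep i).2

namespace Subgroup.IsSubnormal

theorem commutator_eq_bot_of_disjoint {S N : Subgroup G} (hS : S.IsSubnormal) [IsPerfect S]
    (hSN : S ≤ normalizer (N : Set G)) (hdisj : Disjoint S N) : ⁅S, N⁆ = ⊥ := by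
  obtain ⟨n, f, hmono, hnormal, rfl, htop⟩ := hS.exists_chain
  suffices ∀ j, ⁅f 0, N ⊓ f j⁆ = ⊥ by simpa [htop] using this n
  -- `⁅S, N ⊓ f (j + 1)⁆ ≤ N ⊓ f j`, which `S` centralizes by induction; the three subgroups
  -- lemma then gives `⁅⁅S, S⁆, N ⊓ f (j + 1)⁆ = ⊥`, and `⁅S, S⁆ = S`.
  intro j
  induction j with
  | zero => simp [hdisj.symm.eq_bot]
  | succ j ih =>
    have hle : ⁅f 0, N ⊓ f (j + 1)⁆ ≤ N ⊓ f j := by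
      rw [commutator_le]
      intro s hs m hm
      obtain ⟨hmN, hmf⟩ := mem_inf.mp hm
      have hf : f (j + 1) ≤ normalizer (f j : Set G) :=
        (normal_subgroupOf_iff_le_normalizer (hmono j.le_succ)).mp (hnormal j)
      have hsj : s ∈ f j := hmono j.zero_le hs
      rw [commutatorElement_def]
      refine mem_inf.mpr ⟨?_, ?_⟩
      · exact mul_mem ((mem_normalizer_iff.mp (hSN hs) m).mp hmN) (inv_mem hmN)
      · rw [show s * m * s⁻¹ * m⁻¹ = s * (m * s⁻¹ * m⁻¹) by group]
        exact mul_mem hsj ((mem_normalizer_iff.mp (hf hmf) s⁻¹).mp (inv_mem hsj))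
    have h : ⁅⁅f 0, N ⊓ f (j + 1)⁆, f 0⁆ = ⊥ :=
      eq_bot_iff.mpr ((commutator_mono hle le_rfl).trans (by rw [commutator_comm, ih]))
    have h' : ⁅⁅N ⊓ f (j + 1), f 0⁆, f 0⁆ = ⊥ := by rwa [commutator_comm (N ⊓ f (j + 1))]
    simpa [commutator_eq_self] using commutator_commutator_eq_bot_of_rotate h h'

theorem eq_of_le_of_isSimpleGroup {S T : Subgroup G} (hS : S.IsSubnormal) [Nontrivial S]
    [hT : IsSimpleGroup T] (hST : S ≤ T) : S = T := by
  rcases hS.subgroupOf.eq_bot_or_top_of_isSimpleGroup hT with h | h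
  · rw [subgroupOf_eq_bot, disjoint_of_le_iff_left_eq_bot hST] at h
    exact absurd h ((nontrivial_iff_ne_bot S).mp inferInstance)
  · exact le_antisymm hST (subgroupOf_eq_top.mp h)

theorem commutator_eq_bot_of_ne {S T : Subgroup G} (hS : S.IsSubnormal) (hT : T.IsSubnormal)
    [IsSimpleGroup S] [IsPerfect S] [IsSimpleGroup T] (hne : S ≠ T) : ⁅S, T⁆ = ⊥ := by
  obtain ⟨n, f, hmono, hnormal, rfl, htop⟩ := hT.exists_chain
  suffices ∀ i, S ≤ f i → ⁅S, f 0⁆ = ⊥ from this n (htop ▸ le_top)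
  -- At the first term `f (i + 1)` of the series through `T` that contains `S`, the simple group
  -- `S` normalizes `f i` without lying in it, hence meets it trivially.
  intro i
  induction i with
  | zero => exact fun hle => absurd (hS.eq_of_le_of_isSimpleGroup hle) hne
  | succ i ih =>
    intro hle
    by_cases hSi : S ≤ f i
    · exact ih hSi
    have hSN : S ≤ normalizer (f i : Set G) :=
      hle.trans ((normal_subgroupOf_iff_le_normalizer (hmono i.le_succ)).mp (hnormal i))
    have hdisj : Disjoint S (f i) := by
      rcases (normal_subgroupOf_of_le_normalizer hSN).eq_bot_or_eq_top with h | h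
      · exact (subgroupOf_eq_bot.mp h).symm
      · exact absurd (subgroupOf_eq_top.mp h) hSi
    exact eq_bot_iff.mpr ((commutator_mono le_rfl (hmono i.zero_le)).trans
      (hS.commutator_eq_bot_of_disjoint hSN hdisj).le)

end Subgroup.IsSubnormal

section Transversal

variable {H : Subgroup G} {ι : Type*} {g : ι → G}

theorem eq_of_mul_inv_mem_of_existsUnique (htrans : ∀ x : G, ∃! i, x * (g i)⁻¹ ∈ H) {i j : ι}
    (h : g i * (g j)⁻¹ ∈ H) : i = j :=
  (htrans (g i)).unique (by simp) h

theorem exists_perm_mul_mul_inv_mem (htrans : ∀ x : G, ∃! i, x * (g i)⁻¹ ∈ H) (x : G) :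
    ∃ σ : Equiv.Perm ι, ∀ i, g i * x * (g (σ i))⁻¹ ∈ H := by
  choose idx hidx using fun y => (htrans y).exists
  have hinv : ∀ (y : G) i, idx (g (idx (g i * y)) * y⁻¹) = i := fun y i =>
    (htrans _).unique (hidx _) (by simpa [mul_assoc] using inv_mem (hidx (g i * y)))
  exact ⟨⟨fun i => idx (g i * x), fun j => idx (g j * x⁻¹), hinv x,
    fun j => by simpa using hinv x⁻¹ j⟩, fun i => hidx _⟩

end Transversal

theorem exists_mem_iSup_forall_conjSub_eq {ι : Type*} [Finite ι] {K : ι → Subgroup G}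
    (hK : Pairwise fun i j => K i ≤ centralizer (K j : Set G)) {t : ι → G}
    (ht : ∀ i, t i ∈ K i) :
    ∃ a ∈ ⨆ i, K i, ∀ j, ∀ H ≤ K j, conjSub a⁻¹ H = conjSub (t j)⁻¹ H := by
  classical
  cases nonempty_fintype ι
  have comm : ((Finset.univ : Finset ι) : Set ι).Pairwise fun i j => Commute (t i) (t j) :=
    fun i _ j _ hij => ((mem_centralizer_iff.mp (hK hij (ht i))) (t j) (ht j)).symm
  refine ⟨Finset.univ.noncommProd t comm,
    noncommProd_mem _ _ fun i _ => le_iSup K i (ht i), fun j H hH => ?_⟩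
  rw [← Finset.univ.noncommProd_erase_mul (Finset.mem_univ j) t comm, mul_inv_rev,
    conjSub_mul_of_mem_centralizer]
  refine inv_mem (centralizer_le hH (noncommProd_mem _ _ fun k hk => hK ?_ (ht k)))
  exact Finset.ne_of_mem_erase hk

theorem pairwise_conjSub_le_centralizer {S : Subgroup G} (hS : S.IsSubnormal)
    [IsSimpleGroup S] [IsPerfect S] {ι : Type*} {g : ι → G}
    (hg : Pairwise fun i j => g i * (g j)⁻¹ ∉ normalizer (S : Set G)) :
    Pairwise fun i j => conjSub (g i)⁻¹ S ≤ centralizer (conjSub (g j)⁻¹ S : Set G) := by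
  intro i j hij
  rw [← commutator_eq_bot_iff_le_centralizer]
  refine (hS.conjSub _).commutator_eq_bot_of_ne (hS.conjSub _) fun h => hg hij.symm ?_
  rw [← conjSub_eq_self_iff, conjSub_mul, h, ← conjSub_mul, mul_inv_cancel, conjSub_one]

end

theorem class_invariant_of_aut_invariant_general {G : Type*} [Group G]
    (S U : Subgroup G) (hsub : IsSubnormalIn S) (hsimple : IsSimpleGroup S)
    (hnonab : ¬ ∀ a b : S, a * b = b * a) (hUS : U ≤ S)
    (hinv : ∀ x ∈ Subgroup.normalizer (S : Set G), ∃ s ∈ S, conjSub x⁻¹ U = conjSub s⁻¹ U)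
    (n : ℕ) (g : Fin n → G)
    (htrans : ∀ x : G, ∃! i : Fin n, x * (g i)⁻¹ ∈ Subgroup.normalizer (S : Set G)) :
    {K : Subgroup G | ∃ x : G, K = conjSub x⁻¹ (⨆ i : Fin n, conjSub (g i)⁻¹ U)} =
      {K : Subgroup G | ∃ a ∈ Subgroup.normalClosure (S : Set G),
        K = conjSub a⁻¹ (⨆ i : Fin n, conjSub (g i)⁻¹ U)} := by
  refine Set.ext fun K => ⟨?_, fun ⟨a, _, hK⟩ => ⟨a, hK⟩⟩
  rintro ⟨x, rfl⟩
  have : IsPerfect S := isPerfect_of_isSimpleGroup S fun h => hnonab h.is_comm.comm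
  obtain ⟨σ, hσ⟩ := exists_perm_mul_mul_inv_mem htrans x
  choose s hsS hs using fun i => hinv _ (hσ i)
  set t : Fin n → G := fun j => (g j)⁻¹ * s (σ.symm j) * g j
  have ht : ∀ j, t j ∈ conjSub (g j)⁻¹ S := fun j =>
    mem_conjSub.mpr (by simpa [t, mul_assoc] using hsS (σ.symm j))
  obtain ⟨a, ha, hat⟩ := exists_mem_iSup_forall_conjSub_eq (pairwise_conjSub_le_centralizer
    hsub.isSubnormal fun i j hij h => hij (eq_of_mul_inv_mem_of_existsUnique htrans h)) ht
  have hstep : ∀ i, conjSub x⁻¹ (conjSub (g i)⁻¹ U) =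
      conjSub (t (σ i))⁻¹ (conjSub (g (σ i))⁻¹ U) := by
    intro i
    rw [← conjSub_mul, ← conjSub_mul,
      show x⁻¹ * (g i)⁻¹ = (g (σ i))⁻¹ * (g i * x * (g (σ i))⁻¹)⁻¹ by group,
      conjSub_mul, hs i, ← conjSub_mul]
    simp only [t, Equiv.symm_apply_apply]
    group
  refine ⟨a, iSup_le (fun j => conjSub_le_normalClosure _ S) ha, ?_⟩
  calc conjSub x⁻¹ (⨆ i, conjSub (g i)⁻¹ U)
      = ⨆ i, conjSub (t (σ i))⁻¹ (conjSub (g (σ i))⁻¹ U) := by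
        rw [conjSub_iSup]; exact iSup_congr hstep
    _ = ⨆ j, conjSub (t j)⁻¹ (conjSub (g j)⁻¹ U) :=
        σ.iSup_comp (g := fun j => conjSub (t j)⁻¹ (conjSub (g j)⁻¹ U))
    _ = conjSub a⁻¹ (⨆ j, conjSub (g j)⁻¹ U) := by
        rw [conjSub_iSup]; exact iSup_congr fun j => (hat j _ (conjSub_mono hUS)).symm

/-- If `S` is a nonabelian simple subnormal subgroup of `G`, `U ≤ S` satisfies
`U^{Aut_G(S)} = U^S` (every conjugate of `U` by an element of `N_G(S)` is an
`S`-conjugate of `U`), `g₁, …, gₙ` is a right transversal of `N_G(S)` in `G`,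
`A = ⟨S^G⟩` and `V = ⟨U^{g₁}, …, U^{gₙ}⟩`, then `V^G = V^A`. -/
theorem class_invariant_of_aut_invariant {G : Type*} [Group G] [Finite G]
    (S U : Subgroup G) (hsub : IsSubnormalIn S) (hsimple : IsSimpleGroup S)
    (hnonab : ¬ ∀ a b : S, a * b = b * a) (hUS : U ≤ S)
    (hinv : ∀ x ∈ Subgroup.normalizer (S : Set G), ∃ s ∈ S, conjSub x⁻¹ U = conjSub s⁻¹ U)
    (n : ℕ) (g : Fin n → G)
    (htrans : ∀ x : G, ∃! i : Fin n, x * (g i)⁻¹ ∈ Subgroup.normalizer (S : Set G)) :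
    {K : Subgroup G | ∃ x : G, K = conjSub x⁻¹ (⨆ i : Fin n, conjSub (g i)⁻¹ U)} =
      {K : Subgroup G | ∃ a ∈ Subgroup.normalClosure (S : Set G),
        K = conjSub a⁻¹ (⨆ i : Fin n, conjSub (g i)⁻¹ U)} :=
  class_invariant_of_aut_invariant_general S U hsub hsimple hnonab hUS hinv n g htrans
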